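/- Let t be a positive integer which is not a power of 2, let K be an algebraic closure of F_2, and let H̄(X,Y) = ((X+1)^t + X^t + (Y+1)^t + Y^t)/(X+Y) ∈ F_2[X,Y]. If there exist a univariate polynomial F ∈ K[X] with deg F ≥ 2 and a polynomial G ∈ K[X,Y] such that H̄(X,Y) = F(G(X,Y)) in K[X,Y], then t is the sum of exactly two distinct powers of 2 (i.e., the binary expansion of t has exactly two nonzero digits). -/

import Mathlib

/-!
Write `t = 2 ^ a * u` with `u` odd, so `u ≥ 3`. In characteristic two, `g = (X + 1) ^ u + X ^ u`
is monic of degree `u - 1` and the right-hand side is `(g x + g y) ^ 2 ^ a`. Comparing the top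
homogeneous components of `(x + y) * F(G) = (g x + g y) ^ 2 ^ a` and setting `y = 1` gives
`(x + 1) * c * P ^ n = (x ^ (u - 1) + 1) ^ 2 ^ a` with `n = deg F`. If `u - 1 = 2 ^ e * v` with `v`
odd, the right-hand side is a power `Q` of the separable polynomial `x ^ v - 1`. When `v > 1`,
comparing root multiplicities at `1` and at a primitive `v`-th root of unity gives `Q ≡ 1` and
`Q ≡ 0` modulo `n`, forcing `n = 1`. Hence `v = 1` and `t = 2 ^ a + 2 ^ (a + e)`.
-/

open Polynomial

theorem Polynomial.rootMultiplicity_pow {R : Type*} [CommRing R] [IsDomain R] (p : R[X]) (n : ℕ)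
    (x : R) : rootMultiplicity x (p ^ n) = n * rootMultiplicity x p := by
  classical
  rw [← count_roots, roots_pow, Multiset.count_nsmul, count_roots]

theorem Polynomial.coeff_aeval_C_mul_X {R S : Type*} [CommSemiring R] [CommSemiring S]
    [Algebra R S] (g : R[X]) (w : S) (k : ℕ) :
    (aeval (C w * X) g).coeff k = algebraMap R S (g.coeff k) * w ^ k := by
  rw [← aeval_map_algebraMap S, ← comp_eq_aeval, comp_C_mul_X_coeff, coeff_map]

section Aeval

variable {K S : Type*} [Field K] [CommRing S] [IsDomain S] [Algebra K S]

theorem Polynomial.natDegree_aeval_eq_mul (F : K[X]) (q : S[X]) :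
    (aeval q F).natDegree = F.natDegree * q.natDegree := by
  rw [← aeval_map_algebraMap S, ← comp_eq_aeval, natDegree_comp,
    natDegree_map_eq_of_injective (algebraMap K S).injective]

theorem Polynomial.leadingCoeff_aeval_eq_mul (F : K[X]) {q : S[X]} (hq : q.natDegree ≠ 0) :
    (aeval q F).leadingCoeff = algebraMap K S F.leadingCoeff * q.leadingCoeff ^ F.natDegree := by
  rw [← aeval_map_algebraMap S, ← comp_eq_aeval, leadingCoeff_comp hq, leadingCoeff_map,
    natDegree_map_eq_of_injective (algebraMap K S).injective]

end Aeval

section CharTwo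

variable {R : Type*} [CommRing R] [CharP R 2]

theorem add_one_pow_add_pow_two_pow_mul (x : R) (a u : ℕ) :
    (x + 1) ^ (2 ^ a * u) + x ^ (2 ^ a * u) = ((x + 1) ^ u + x ^ u) ^ 2 ^ a := by
  rw [add_pow_char_pow, ← pow_mul', ← pow_mul']

variable {u : ℕ}

theorem Polynomial.coeff_X_add_one_pow_add_X_pow (k : ℕ) :
    ((X + 1) ^ u + X ^ u : R[X]).coeff k = if u ≤ k then 0 else (u.choose k : R) := by
  rw [coeff_add, coeff_X_add_one_pow, coeff_X_pow]
  split_ifs with h1 h2 h2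
  · subst h1; simp [CharTwo.add_self_eq_zero]
  · omega
  · simp [Nat.choose_eq_zero_of_lt (lt_of_le_of_ne h2 (Ne.symm h1))]
  · rw [add_zero]

theorem Polynomial.coeff_pred_X_add_one_pow_add_X_pow (hu : Odd u) :
    ((X + 1) ^ u + X ^ u : R[X]).coeff (u - 1) = 1 := by
  rw [coeff_X_add_one_pow_add_X_pow, if_neg (by grind), Nat.choose_symm hu.pos,
    Nat.choose_one_right, CharTwo.natCast_eq_ite, if_neg (Nat.not_even_iff_odd.mpr hu)]

variable [Nontrivial R]

theorem Polynomial.natDegree_X_add_one_pow_add_X_pow (hu : Odd u) :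
    ((X + 1) ^ u + X ^ u : R[X]).natDegree = u - 1 :=
  natDegree_eq_of_le_of_coeff_ne_zero
    (natDegree_le_iff_coeff_eq_zero.mpr fun k hk ↦ by
      rw [coeff_X_add_one_pow_add_X_pow, if_pos (by omega)])
    (by simp [coeff_pred_X_add_one_pow_add_X_pow hu])

theorem Polynomial.monic_X_add_one_pow_add_X_pow (hu : Odd u) :
    ((X + 1) ^ u + X ^ u : R[X]).Monic := by
  rw [Monic, leadingCoeff, natDegree_X_add_one_pow_add_X_pow hu,
    coeff_pred_X_add_one_pow_add_X_pow hu]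

end CharTwo

section ScaledSubst

variable {K : Type*} [Field K]

variable (K) in
/-- `p(x, y) ↦ p(x T, T)`: the leading coefficient in `T` is the top homogeneous component
of `p`, evaluated at `y = 1`. -/
noncomputable def scaledSubst : MvPolynomial (Fin 2) K →ₐ[K] K[X][X] :=
  MvPolynomial.aeval fun i ↦ C (![X, 1] i) * X

theorem scaledSubst_X (i : Fin 2) : scaledSubst K (MvPolynomial.X i) = C (![X, 1] i) * X :=
  MvPolynomial.aeval_X _ _

theorem coeff_scaledSubst_aeval_X_add_aeval_X (g : K[X]) (k : ℕ) :
    (scaledSubst K (aeval (MvPolynomial.X 0) g + aeval (MvPolynomial.X 1) g)).coeff k =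
      C (g.coeff k) * (X ^ k + 1) := by
  rw [map_add, ← aeval_algHom_apply, ← aeval_algHom_apply, scaledSubst_X, scaledSubst_X,
    coeff_add, coeff_aeval_C_mul_X, coeff_aeval_C_mul_X]
  simp [mul_add]

variable {g : K[X]}

theorem natDegree_scaledSubst_aeval_X_add_aeval_X (hg : g.Monic) (hd : g.natDegree ≠ 0) :
    (scaledSubst K (aeval (MvPolynomial.X 0) g + aeval (MvPolynomial.X 1) g)).natDegree =
      g.natDegree := by
  refine natDegree_eq_of_le_of_coeff_ne_zero (natDegree_le_iff_coeff_eq_zero.mpr fun k hk ↦ ?_) ?_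
  · rw [coeff_scaledSubst_aeval_X_add_aeval_X, coeff_eq_zero_of_natDegree_lt hk, C_0, zero_mul]
  · rw [coeff_scaledSubst_aeval_X_add_aeval_X, hg.coeff_natDegree, C_1, one_mul, ← C_1]
    exact X_pow_add_C_ne_zero (Nat.pos_of_ne_zero hd) 1

theorem leadingCoeff_scaledSubst_aeval_X_add_aeval_X (hg : g.Monic) (hd : g.natDegree ≠ 0) :
    (scaledSubst K (aeval (MvPolynomial.X 0) g + aeval (MvPolynomial.X 1) g)).leadingCoeff =
      X ^ g.natDegree + 1 := by
  rw [leadingCoeff, natDegree_scaledSubst_aeval_X_add_aeval_X hg hd,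
    coeff_scaledSubst_aeval_X_add_aeval_X, hg.coeff_natDegree, C_1, one_mul]

theorem exists_X_add_one_mul_C_mul_pow_eq [CharP K 2] {a u : ℕ} (hu : Odd u) (hu1 : u ≠ 1)
    (F : K[X]) (G : MvPolynomial (Fin 2) K)
    (h : (MvPolynomial.X 0 + MvPolynomial.X 1) * aeval G F =
      (MvPolynomial.X 0 + 1) ^ (2 ^ a * u) + MvPolynomial.X 0 ^ (2 ^ a * u) +
        (MvPolynomial.X 1 + 1) ^ (2 ^ a * u) + MvPolynomial.X 1 ^ (2 ^ a * u)) :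
    ∃ p : K[X], (X + 1) * (C F.leadingCoeff * p ^ F.natDegree) = (X ^ (u - 1) + 1) ^ 2 ^ a := by
  set g : K[X] := (X + 1) ^ u + X ^ u
  have hg : g.Monic := monic_X_add_one_pow_add_X_pow hu
  have hdg : g.natDegree = u - 1 := natDegree_X_add_one_pow_add_X_pow hu
  have hd : g.natDegree ≠ 0 := by grind
  set M := scaledSubst K (aeval (MvPolynomial.X 0) g + aeval (MvPolynomial.X 1) g)
  have hM : M ≠ 0 :=
    ne_zero_of_natDegree_gt (n := 0) <| by
      rw [natDegree_scaledSubst_aeval_X_add_aeval_X hg hd]; omega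
  have hX1 : (X + 1 : K[X]) ≠ 0 := by simpa using X_add_C_ne_zero (1 : K)
  have hxy : scaledSubst K (MvPolynomial.X 0 + MvPolynomial.X 1) = C (X + 1) * X := by
    simp [scaledSubst_X, add_mul]
  have key : C (X + 1) * X * aeval (scaledSubst K G) F = M ^ 2 ^ a := by
    rw [← hxy, aeval_algHom_apply, ← map_mul, h, add_one_pow_add_pow_two_pow_mul,
      add_assoc, add_one_pow_add_pow_two_pow_mul, ← add_pow_char_pow, ← map_pow]
    simp [g]
  have hne : aeval (scaledSubst K G) F ≠ 0 := right_ne_zero_of_mul (key ▸ pow_ne_zero _ hM)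
  have hdeg := congrArg natDegree key
  rw [natDegree_mul (mul_ne_zero (C_ne_zero.mpr hX1) X_ne_zero) hne, natDegree_C_mul_X _ hX1,
    natDegree_pow, natDegree_aeval_eq_mul, natDegree_scaledSubst_aeval_X_add_aeval_X hg hd,
    hdg] at hdeg
  have hG : (scaledSubst K G).natDegree ≠ 0 := by
    intro h0
    rw [h0, mul_zero, add_zero] at hdeg
    have := Nat.eq_one_of_mul_eq_one_left hdeg.symm
    grind
  refine ⟨(scaledSubst K G).leadingCoeff, ?_⟩
  have hlc := congrArg leadingCoeff key
  rwa [leadingCoeff_mul, leadingCoeff_C_mul_X, leadingCoeff_aeval_eq_mul F hG, leadingCoeff_pow,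
    leadingCoeff_scaledSubst_aeval_X_add_aeval_X hg hd, hdg] at hlc

end ScaledSubst

theorem eq_one_of_X_sub_one_mul_C_mul_pow_eq {K : Type*} [Field K] [IsSepClosed K] {v n Q : ℕ}
    [NeZero (v : K)] (hv : 2 ≤ v) {c : K} {p : K[X]}
    (h : (X - 1) * (C c * p ^ n) = (X ^ v - 1) ^ Q) : n = 1 := by
  have hsep : (X ^ v - 1 : K[X]).Separable := X_pow_sub_one_separable_iff.mpr (NeZero.ne _)
  have hlhs : (X - 1) * (C c * p ^ n) ≠ 0 := h ▸ pow_ne_zero _ hsep.ne_zero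
  have mult_eq : ∀ z : K, z ^ v = 1 →
      rootMultiplicity z (X - 1) + n * rootMultiplicity z p = Q := by
    intro z hz
    have hroot : rootMultiplicity z (X ^ v - 1 : K[X]) = 1 :=
      le_antisymm (rootMultiplicity_le_one_of_separable hsep z)
        ((rootMultiplicity_pos hsep.ne_zero).mpr (by simp [hz]))
    have := congrArg (rootMultiplicity z) h
    rwa [rootMultiplicity_mul hlhs, rootMultiplicity_mul (right_ne_zero_of_mul hlhs),
      rootMultiplicity_C, rootMultiplicity_pow, rootMultiplicity_pow, hroot, mul_one,
      zero_add] at this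
  obtain ⟨ζ, hζ⟩ := HasEnoughRootsOfUnity.exists_primitiveRoot K v
  have h1 := mult_eq 1 (one_pow v)
  have hζ1 := mult_eq ζ hζ.pow_eq_one
  rw [← C_1, rootMultiplicity_X_sub_C_self] at h1
  rw [rootMultiplicity_eq_zero (by simpa [sub_eq_zero] using hζ.ne_one (by omega)),
    zero_add] at hζ1
  have : n ∣ n * rootMultiplicity 1 p + 1 := by
    rw [add_comm, h1, ← hζ1]; exact dvd_mul_right _ _
  exact Nat.dvd_one.mp ((Nat.dvd_add_right (dvd_mul_right _ _)).mp this)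

theorem exists_eq_two_pow_of_X_add_one_mul_C_mul_pow_eq {K : Type*} [Field K] [IsSepClosed K]
    [CharP K 2] {m n N : ℕ} (hm : m ≠ 0) (hn : n ≠ 1) {c : K} {p : K[X]}
    (h : (X + 1) * (C c * p ^ n) = (X ^ m + 1) ^ N) : ∃ e, m = 2 ^ e := by
  obtain ⟨e, v, hv, rfl⟩ := Nat.exists_eq_two_pow_mul_odd hm
  refine ⟨e, ?_⟩
  rcases eq_or_ne v 1 with rfl | hv1
  · rw [mul_one]
  have : NeZero (v : K) := ⟨by simp [CharTwo.natCast_eq_ite, Nat.not_even_iff_odd.mpr hv]⟩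
  rw [pow_mul', ← one_pow (2 ^ e), ← add_pow_char_pow, one_pow, ← pow_mul,
    ← CharTwo.sub_eq_add, ← CharTwo.sub_eq_add] at h
  exact absurd (eq_one_of_X_sub_one_mul_C_mul_pow_eq (by grind) h) hn

theorem stmt_16 (t : ℕ) (ht : 0 < t) (htn : ¬ ∃ k : ℕ, t = 2 ^ k)
    (Hbar : MvPolynomial (Fin 2) (ZMod 2))
    (hHbar : (MvPolynomial.X 0 + MvPolynomial.X 1) * Hbar =
        (MvPolynomial.X 0 + 1) ^ t + (MvPolynomial.X 0) ^ t +
        (MvPolynomial.X 1 + 1) ^ t + (MvPolynomial.X 1) ^ t)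
    (F : Polynomial (AlgebraicClosure (ZMod 2))) (hF : 2 ≤ F.natDegree)
    (G : MvPolynomial (Fin 2) (AlgebraicClosure (ZMod 2)))
    (hFG : MvPolynomial.map (algebraMap (ZMod 2) (AlgebraicClosure (ZMod 2))) Hbar =
        Polynomial.aeval G F) :
    ∃ i j : ℕ, i < j ∧ t = 2 ^ i + 2 ^ j := by
  have h := congrArg (MvPolynomial.map (algebraMap (ZMod 2) (AlgebraicClosure (ZMod 2)))) hHbar
  simp only [map_mul, map_add, map_pow, map_one, MvPolynomial.map_X, hFG] at h
  obtain ⟨a, u, hu, rfl⟩ := Nat.exists_eq_two_pow_mul_odd ht.ne'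
  have hu1 : u ≠ 1 := fun h1 ↦ htn ⟨a, by rw [h1, mul_one]⟩
  obtain ⟨p, hp⟩ := exists_X_add_one_mul_C_mul_pow_eq hu hu1 F G h
  obtain ⟨e, he⟩ := exists_eq_two_pow_of_X_add_one_mul_C_mul_pow_eq (by grind) (by omega) hp
  have he0 : e ≠ 0 := by rintro rfl; grind
  refine ⟨a, a + e, by omega, ?_⟩
  rw [show u = 2 ^ e + 1 by have := hu.pos; omega, pow_add]
  ring
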